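/- arXiv:2112.14284 — 2 statements merged into one kernel-verified Lean document; each statement's English description precedes it below -/
import Mathlib

section
/- Let X and Y be Hermitian d×d complex matrices. Then tr((X ⊗ X ⊗ Y ⊗ Y) P_sym^4) ≤ (13/6) · tr((X ⊗ X) P_sym^2) · tr((Y ⊗ Y) P_sym^2), where the tensor products are Kronecker products. -/
open Matrix

/-- The unitary on `(ℂ^d)^{⊗k}` permuting the tensor factors according to `σ`,
written as a matrix indexed by functions `Fin k → Fin d`. -/
noncomputable def permMatrix (d k : ℕ) (σ : Equiv.Perm (Fin k)) :
    Matrix (Fin k → Fin d) (Fin k → Fin d) ℂ :=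
  Matrix.of fun f g => if f = g ∘ σ then 1 else 0

/-- The orthogonal projector `P_sym^k = (1/k!) ∑_{σ ∈ S_k} U_σ`
onto the symmetric subspace of `(ℂ^d)^{⊗k}`. -/
noncomputable def psym (d k : ℕ) : Matrix (Fin k → Fin d) (Fin k → Fin d) ℂ :=
  ((Nat.factorial k : ℂ))⁻¹ • ∑ σ : Equiv.Perm (Fin k), permMatrix d k σ

/-- The fourfold tensor (Kronecker) product `A ⊗ B ⊗ C ⊗ D`,
indexed by functions `Fin 4 → Fin d`. -/
noncomputable def tens4 {d : ℕ} (A B C D : Matrix (Fin d) (Fin d) ℂ) :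
    Matrix (Fin 4 → Fin d) (Fin 4 → Fin d) ℂ :=
  Matrix.of fun f g => A (f 0) (g 0) * B (f 1) (g 1) * C (f 2) (g 2) * D (f 3) (g 3)

/-- The twofold tensor (Kronecker) product `A ⊗ B`, indexed by functions `Fin 2 → Fin d`. -/
noncomputable def tens2 {d : ℕ} (A B : Matrix (Fin d) (Fin d) ℂ) :
    Matrix (Fin 2 → Fin d) (Fin 2 → Fin d) ℂ :=
  Matrix.of fun f g => A (f 0) (g 0) * B (f 1) (g 1)

/-!
Writing `P_sym^4 = (1/24) ∑_σ U_σ`, each `tr ((M₀ ⊗ M₁ ⊗ M₂ ⊗ M₃) U_σ)` is the product, over the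
cycles of `σ`, of the traces of the words in the `Mᵢ` read along the cycles. It is unchanged when `σ`
is conjugated by `τ` and the factors are permuted by `τ`, so one representative per cycle type
suffices. With `a = tr X` and `b = tr Y` this gives `2 tr ((X ⊗ X) P_sym^2) = a² + tr(X²)` and
`24 tr ((X ⊗ X ⊗ Y ⊗ Y) P_sym^4) = a²b² + tr(X²) b² + a² tr(Y²) + 4ab tr(XY) + tr(X²) tr(Y²)
  + 2 tr(XY)² + 4b tr(X²Y) + 4a tr(XY²) + 4 tr(X²Y²) + 2 tr(XYXY)`.
For Hermitian `X`, `Y` and Frobenius norms `x = ‖X‖`, `y = ‖Y‖` we have `tr(X²) = x²` and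
`tr(X²Y²) = ‖XY‖² ≤ x²y²`; every other word is bounded by Cauchy–Schwarz, `|tr(AB)| ≤ ‖A‖ ‖B‖`,
and submultiplicativity. AM–GM on the mixed terms leaves
`a²b² + 5x²b² + 5a²y² + 13x²y² ≤ 13 (a² + x²)(b² + y²)`.
-/

open Equiv

theorem Fintype.sum_fin_succ_pi {α M : Type*} [Fintype α] [AddCommMonoid M] {m : ℕ}
    (g : (Fin (m + 1) → α) → M) : ∑ f, g f = ∑ a, ∑ f : Fin m → α, g (Fin.cons a f) := by
  rw [← (Fin.consEquiv fun _ => α).sum_comp, Fintype.sum_prod_type]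
  rfl

theorem Fintype.sum_eq_sum_map_list {α M : Type*} [Fintype α] [DecidableEq α] [AddCommMonoid M]
    (l : List α) (hl : l.Nodup) (hu : (Finset.univ : Finset α) = l.toFinset) (g : α → M) :
    ∑ a, g a = (l.map g).sum := by
  rw [hu, List.sum_toFinset g hl]

section PermTrace

variable {n R : Type*} [Fintype n] [CommSemiring R] {k : ℕ}

/-- `tr ((M 0 ⊗ ⋯ ⊗ M (k - 1)) U_σ)`, see `trace_tens4_mul_permMatrix`. -/
def permTrace (M : Fin k → Matrix n n R) (σ : Perm (Fin k)) : R :=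
  ∑ f : Fin k → n, ∏ i, M i (f i) (f (σ i))

theorem permTrace_conj (M : Fin k → Matrix n n R) (σ τ : Perm (Fin k)) :
    permTrace M (τ * σ * τ⁻¹) = permTrace (M ∘ τ) σ := by
  refine (Fintype.sum_equiv (arrowCongr τ (Equiv.refl n)) _ _ fun f => ?_).symm
  exact Fintype.prod_equiv τ _ _ fun i => by simp

theorem permTrace_one [DecidableEq n] (M : Fin k → Matrix n n R) :
    permTrace M 1 = ∏ i, trace (M i) := by
  simp only [permTrace, trace, Matrix.diag, Fintype.prod_sum, Perm.one_apply]

theorem permTrace_fin_two (M : Fin 2 → Matrix n n R) (σ : Perm (Fin 2)) :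
    permTrace M σ = ∑ a, ∑ b, M 0 a (![a, b] (σ 0)) * M 1 b (![a, b] (σ 1)) := by
  simp only [permTrace, Fintype.sum_fin_succ_pi, Fintype.sum_unique, Fin.prod_univ_two]
  rfl

theorem permTrace_fin_four (M : Fin 4 → Matrix n n R) (σ : Perm (Fin 4)) :
    permTrace M σ = ∑ a, ∑ b, ∑ c, ∑ e,
      M 0 a (![a, b, c, e] (σ 0)) * M 1 b (![a, b, c, e] (σ 1)) *
        M 2 c (![a, b, c, e] (σ 2)) * M 3 e (![a, b, c, e] (σ 3)) := by
  simp only [permTrace, Fintype.sum_fin_succ_pi, Fintype.sum_unique, Fin.prod_univ_four]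
  rfl

theorem permTrace_swap_fin_two (M : Fin 2 → Matrix n n R) :
    permTrace M (swap 0 1) = trace (M 0 * M 1) := by
  simp [permTrace_fin_two, trace, Matrix.mul_apply]

theorem permTrace_swap (M : Fin 4 → Matrix n n R) :
    permTrace M (swap 0 1) = trace (M 0 * M 1) * trace (M 2) * trace (M 3) := by
  simp [permTrace_fin_four, swap_apply_of_ne_of_ne, ← Finset.sum_mul, ← Finset.mul_sum, trace,
    Matrix.mul_apply]

theorem permTrace_swap_mul_swap (M : Fin 4 → Matrix n n R) :
    permTrace M (swap 0 1 * swap 2 3) = trace (M 0 * M 1) * trace (M 2 * M 3) := by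
  simp only [permTrace_fin_four, Perm.coe_mul, Function.comp_apply, swap_apply_left,
    swap_apply_right, swap_apply_of_ne_of_ne, ne_eq, Fin.reduceEq, not_false_eq_true, cons_val,
    trace, diag_apply, Matrix.mul_apply, mul_assoc, ← Finset.mul_sum]
  simp only [Finset.sum_mul, mul_assoc]

theorem permTrace_cycle_three (M : Fin 4 → Matrix n n R) :
    permTrace M (swap 0 1 * swap 1 2) = trace (M 0 * (M 1 * M 2)) * trace (M 3) := by
  simp only [permTrace_fin_four, Perm.coe_mul, Function.comp_apply, swap_apply_left,
    swap_apply_right, swap_apply_of_ne_of_ne, ne_eq, Fin.reduceEq, not_false_eq_true, cons_val,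
    trace, diag_apply, Matrix.mul_apply, mul_assoc, ← Finset.mul_sum]
  simp only [Finset.sum_mul, mul_assoc]

theorem permTrace_finRotate (M : Fin 4 → Matrix n n R) :
    permTrace M (finRotate 4) = trace (M 0 * (M 1 * (M 2 * M 3))) := by
  simp [permTrace_fin_four, trace, Matrix.mul_apply, Finset.mul_sum, mul_assoc]

theorem sum_permTrace_fin_two [DecidableEq n] (X : Matrix n n R) :
    ∑ σ, permTrace ![X, X] σ = trace X ^ 2 + trace (X * X) := by
  rw [Fintype.sum_eq_sum_map_list [1, swap 0 1] (by decide) (by decide)]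
  simp [permTrace_one, permTrace_swap_fin_two, sq]

theorem sum_permTrace_fin_four [DecidableEq n] (X Y : Matrix n n R) :
    ∑ σ, permTrace ![X, X, Y, Y] σ =
      trace X ^ 2 * trace Y ^ 2 + trace (X * X) * trace Y ^ 2 + trace X ^ 2 * trace (Y * Y)
        + 4 * trace (X * Y) * trace X * trace Y + trace (X * X) * trace (Y * Y)
        + 2 * trace (X * Y) ^ 2 + 4 * trace (X * (X * Y)) * trace Y
        + 4 * trace (X * (Y * Y)) * trace X + 4 * trace (X * (X * (Y * Y)))
        + 2 * trace (X * (Y * (X * Y))) := by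
  -- Each element of `S₄` is written as `τ * σ₀ * τ⁻¹` with `σ₀` one of the permutations treated
  -- above, and `τ` chosen so that `![X, X, Y, Y] ∘ τ` produces the words of the right-hand side.
  rw [Fintype.sum_eq_sum_map_list
    [1,
      swap 0 1,
      (swap 0 2 * swap 1 3) * swap 0 1 * (swap 0 2 * swap 1 3)⁻¹,
      swap 1 2 * swap 0 1 * (swap 1 2)⁻¹,
      swap 1 3 * swap 0 1 * (swap 1 3)⁻¹,
      (swap 0 1 * swap 1 2) * swap 0 1 * (swap 0 1 * swap 1 2)⁻¹,
      (swap 0 1 * swap 1 3) * swap 0 1 * (swap 0 1 * swap 1 3)⁻¹,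
      swap 0 1 * swap 2 3,
      swap 1 2 * (swap 0 1 * swap 2 3) * (swap 1 2)⁻¹,
      (swap 1 3 * swap 2 3) * (swap 0 1 * swap 2 3) * (swap 1 3 * swap 2 3)⁻¹,
      swap 0 1 * swap 1 2,
      swap 0 1 * (swap 0 1 * swap 1 2) * (swap 0 1)⁻¹,
      swap 2 3 * (swap 0 1 * swap 1 2) * (swap 2 3)⁻¹,
      (swap 0 1 * swap 2 3) * (swap 0 1 * swap 1 2) * (swap 0 1 * swap 2 3)⁻¹,
      (swap 1 2 * swap 2 3) * (swap 0 1 * swap 1 2) * (swap 1 2 * swap 2 3)⁻¹,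
      swap 1 3 * (swap 0 1 * swap 1 2) * (swap 1 3)⁻¹,
      finRotate 4 * (swap 0 1 * swap 1 2) * (finRotate 4)⁻¹,
      (swap 0 1 * swap 1 3) * (swap 0 1 * swap 1 2) * (swap 0 1 * swap 1 3)⁻¹,
      finRotate 4,
      swap 2 3 * finRotate 4 * (swap 2 3)⁻¹,
      swap 1 2 * finRotate 4 * (swap 1 2)⁻¹,
      swap 0 1 * finRotate 4 * (swap 0 1)⁻¹,
      (swap 1 3 * swap 2 3) * finRotate 4 * (swap 1 3 * swap 2 3)⁻¹,
      (swap 0 1 * swap 2 3) * finRotate 4 * (swap 0 1 * swap 2 3)⁻¹]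
    (by decide) (by decide)]
  simp only [List.map_cons, List.map_nil, List.sum_cons, List.sum_nil, permTrace_conj]
  simp only [permTrace_one, permTrace_swap, permTrace_swap_mul_swap, permTrace_cycle_three,
    permTrace_finRotate]
  simp only [Fin.prod_univ_four, Function.comp_apply, Perm.coe_mul, swap_apply_left,
    swap_apply_right, swap_apply_of_ne_of_ne, ne_eq, Fin.reduceEq, not_false_eq_true,
    finRotate_apply, Fin.reduceAdd, cons_val]
  ring

end PermTrace

theorem trace_mul_permMatrix {d k : ℕ} (A : Matrix (Fin k → Fin d) (Fin k → Fin d) ℂ)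
    (σ : Perm (Fin k)) : trace (A * permMatrix d k σ) = ∑ f, A f (f ∘ σ) := by
  simp [trace, Matrix.mul_apply, permMatrix]

theorem trace_mul_psym {d k : ℕ} (A : Matrix (Fin k → Fin d) (Fin k → Fin d) ℂ) :
    trace (A * psym d k) = (k.factorial : ℂ)⁻¹ * ∑ σ, trace (A * permMatrix d k σ) := by
  simp only [psym, Matrix.mul_smul, trace_smul, Matrix.mul_sum, trace_sum, smul_eq_mul]

theorem trace_tens2_mul_permMatrix {d : ℕ} (A B : Matrix (Fin d) (Fin d) ℂ)
    (σ : Perm (Fin 2)) : trace (tens2 A B * permMatrix d 2 σ) = permTrace ![A, B] σ := by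
  rw [trace_mul_permMatrix]
  simp only [permTrace, Fin.prod_univ_two]
  rfl

theorem trace_tens4_mul_permMatrix {d : ℕ} (A B C D : Matrix (Fin d) (Fin d) ℂ)
    (σ : Perm (Fin 4)) :
    trace (tens4 A B C D * permMatrix d 4 σ) = permTrace ![A, B, C, D] σ := by
  rw [trace_mul_permMatrix]
  simp only [permTrace, Fin.prod_univ_four]
  rfl

theorem trace_tens2_mul_psym {d : ℕ} (X : Matrix (Fin d) (Fin d) ℂ) :
    trace (tens2 X X * psym d 2) = 2⁻¹ * (trace X ^ 2 + trace (X * X)) := by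
  rw [trace_mul_psym]
  simp only [trace_tens2_mul_permMatrix, sum_permTrace_fin_two]
  norm_num [Nat.factorial]

theorem trace_tens4_mul_psym {d : ℕ} (X Y : Matrix (Fin d) (Fin d) ℂ) :
    trace (tens4 X X Y Y * psym d 4) =
      24⁻¹ * (trace X ^ 2 * trace Y ^ 2 + trace (X * X) * trace Y ^ 2
        + trace X ^ 2 * trace (Y * Y) + 4 * trace (X * Y) * trace X * trace Y
        + trace (X * X) * trace (Y * Y) + 2 * trace (X * Y) ^ 2
        + 4 * trace (X * (X * Y)) * trace Y + 4 * trace (X * (Y * Y)) * trace X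
        + 4 * trace (X * (X * (Y * Y))) + 2 * trace (X * (Y * (X * Y)))) := by
  rw [trace_mul_psym]
  simp only [trace_tens4_mul_permMatrix, sum_permTrace_fin_four]
  norm_num [Nat.factorial]

section Frobenius

open scoped Matrix.Norms.Frobenius

variable {l m n α 𝕜 : Type*} [Fintype l] [Fintype m] [Fintype n]

theorem Matrix.frobenius_norm_eq_sqrt [SeminormedAddCommGroup α] (A : Matrix m n α) :
    ‖A‖ = √(∑ i, ∑ j, ‖A i j‖ ^ 2) := by
  simp only [frobenius_norm_def, Real.rpow_two, Real.sqrt_eq_rpow]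

theorem Matrix.frobenius_norm_sq [SeminormedAddCommGroup α] (A : Matrix m n α) :
    ‖A‖ ^ 2 = ∑ i, ∑ j, ‖A i j‖ ^ 2 := by
  rw [frobenius_norm_eq_sqrt, Real.sq_sqrt (by positivity)]

theorem Matrix.norm_trace_mul_le [NonUnitalSeminormedRing α] (A : Matrix m n α)
    (B : Matrix n m α) : ‖trace (A * B)‖ ≤ ‖A‖ * ‖B‖ := by
  have hB : ‖B‖ = √(∑ i, ∑ j, ‖B j i‖ ^ 2) := by
    rw [frobenius_norm_eq_sqrt, Finset.sum_comm]
  calc ‖trace (A * B)‖ = ‖∑ p : m × n, A p.1 p.2 * B p.2 p.1‖ := by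
        simp [trace, Matrix.mul_apply, Fintype.sum_prod_type]
    _ ≤ ∑ p : m × n, ‖A p.1 p.2‖ * ‖B p.2 p.1‖ := norm_sum_le_of_le _ fun p _ => norm_mul_le _ _
    _ ≤ √(∑ p : m × n, ‖A p.1 p.2‖ ^ 2) * √(∑ p : m × n, ‖B p.2 p.1‖ ^ 2) :=
        Real.sum_mul_le_sqrt_mul_sqrt _ _ _
    _ = ‖A‖ * ‖B‖ := by
        rw [frobenius_norm_eq_sqrt, hB, Fintype.sum_prod_type, Fintype.sum_prod_type]

variable [RCLike 𝕜]

theorem Matrix.norm_trace_mul_mul_le (A : Matrix l m 𝕜) (B : Matrix m n 𝕜) (C : Matrix n l 𝕜) :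
    ‖trace (A * (B * C))‖ ≤ ‖A‖ * ‖B‖ * ‖C‖ :=
  calc ‖trace (A * (B * C))‖ ≤ ‖A‖ * ‖B * C‖ := norm_trace_mul_le A (B * C)
    _ ≤ ‖A‖ * ‖B‖ * ‖C‖ := by rw [mul_assoc]; gcongr; exact frobenius_norm_mul B C

theorem Matrix.trace_mul_conjTranspose_self (A : Matrix m n 𝕜) :
    trace (A * Aᴴ) = ((‖A‖ ^ 2 : ℝ) : 𝕜) := by
  simp [frobenius_norm_sq, trace, Matrix.mul_apply, RCLike.mul_conj]

theorem Matrix.IsHermitian.trace_mul_self {A : Matrix n n 𝕜} (hA : A.IsHermitian) :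
    trace (A * A) = ((‖A‖ ^ 2 : ℝ) : 𝕜) := by
  rw [← trace_mul_conjTranspose_self, hA.eq]

theorem Matrix.IsHermitian.trace_mul_self_mul_mul_self {A B : Matrix n n 𝕜} (hA : A.IsHermitian)
    (hB : B.IsHermitian) : trace (A * (A * (B * B))) = ((‖A * B‖ ^ 2 : ℝ) : 𝕜) := by
  rw [← trace_mul_conjTranspose_self, conjTranspose_mul, hA.eq, hB.eq, trace_mul_comm]
  simp only [mul_assoc]

theorem Matrix.IsHermitian.ofReal_re_trace {A : Matrix n n 𝕜} (hA : A.IsHermitian) :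
    ((RCLike.re (trace A) : ℝ) : 𝕜) = trace A :=
  RCLike.conj_eq_iff_re.mp (by rw [starRingEnd_apply, ← trace_conjTranspose, hA.eq])

end Frobenius

theorem cycle_polynomial_le {a b x y z C D P Q S : ℝ} (hC : |C| ≤ x * y) (hD : D ≤ (x * y) ^ 2)
    (hP : |P| ≤ x * x * y) (hQ : |Q| ≤ x * y * y) (hz : 0 ≤ z) (hzxy : z ≤ x * y)
    (hS : S ≤ z * z) :
    a ^ 2 * b ^ 2 + x ^ 2 * b ^ 2 + a ^ 2 * y ^ 2 + 4 * C * a * b + x ^ 2 * y ^ 2 + 2 * D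
      + 4 * P * b + 4 * Q * a + 4 * z ^ 2 + 2 * S ≤ 13 * ((a ^ 2 + x ^ 2) * (b ^ 2 + y ^ 2)) := by
  have hCab : C * a * b ≤ x * y * (|a| * |b|) :=
    calc C * a * b ≤ |C| * (|a| * |b|) := by
          rw [← abs_mul, ← abs_mul, ← mul_assoc]; exact le_abs_self _
      _ ≤ x * y * (|a| * |b|) := by gcongr
  have hPb : P * b ≤ x * x * y * |b| :=
    calc P * b ≤ |P| * |b| := by rw [← abs_mul]; exact le_abs_self _
      _ ≤ x * x * y * |b| := by gcongr
  have hQa : Q * a ≤ x * y * y * |a| :=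
    calc Q * a ≤ |Q| * |a| := by rw [← abs_mul]; exact le_abs_self _
      _ ≤ x * y * y * |a| := by gcongr
  have hz2 : z * z ≤ (x * y) ^ 2 := by rw [sq]; exact mul_self_le_mul_self hz hzxy
  have amgm_ab : 2 * (x * y * (|a| * |b|)) ≤ x ^ 2 * b ^ 2 + y ^ 2 * a ^ 2 := by
    nlinarith [sq_nonneg (x * |b| - y * |a|), sq_abs a, sq_abs b]
  have amgm_b : 2 * (x * x * y * |b|) ≤ x ^ 2 * (y ^ 2 + b ^ 2) := by
    nlinarith [mul_nonneg (sq_nonneg x) (sq_nonneg (y - |b|)), sq_abs b]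
  have amgm_a : 2 * (x * y * y * |a|) ≤ y ^ 2 * (x ^ 2 + a ^ 2) := by
    nlinarith [mul_nonneg (sq_nonneg y) (sq_nonneg (x - |a|)), sq_abs a]
  linarith [sq_nonneg (a * b), sq_nonneg (a * y), sq_nonneg (x * b)]

theorem re_cycle_polynomial_le {a b x y z : ℝ} {c p q s : ℂ} (hc : ‖c‖ ≤ x * y)
    (hp : ‖p‖ ≤ x * x * y) (hq : ‖q‖ ≤ x * y * y) (hz : 0 ≤ z) (hzxy : z ≤ x * y)
    (hs : ‖s‖ ≤ z * z) :
    (24⁻¹ * ((a : ℂ) ^ 2 * (b : ℂ) ^ 2 + ((x ^ 2 : ℝ) : ℂ) * (b : ℂ) ^ 2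
      + (a : ℂ) ^ 2 * ((y ^ 2 : ℝ) : ℂ) + 4 * c * a * b + ((x ^ 2 : ℝ) : ℂ) * ((y ^ 2 : ℝ) : ℂ)
      + 2 * c ^ 2 + 4 * p * b + 4 * q * a + 4 * ((z ^ 2 : ℝ) : ℂ) + 2 * s)).re ≤
      13 / 6 * (2⁻¹ * ((a : ℂ) ^ 2 + ((x ^ 2 : ℝ) : ℂ))).re
        * (2⁻¹ * ((b : ℂ) ^ 2 + ((y ^ 2 : ℝ) : ℂ))).re := by
  have hD : (c ^ 2).re ≤ (x * y) ^ 2 :=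
    (Complex.re_le_norm _).trans (by rw [norm_pow]; gcongr)
  have key := cycle_polynomial_le (a := a) (b := b) ((Complex.abs_re_le_norm c).trans hc) hD
    ((Complex.abs_re_le_norm p).trans hp) ((Complex.abs_re_le_norm q).trans hq) hz hzxy
    ((Complex.re_le_norm s).trans hs)
  simp only [← Complex.ofReal_pow, Complex.mul_re, Complex.mul_im, Complex.add_re, Complex.add_im,
    Complex.ofReal_re, Complex.ofReal_im, Complex.inv_re, Complex.inv_im, Complex.re_ofNat,
    Complex.im_ofNat, Complex.normSq_ofNat, div_self_mul_self', mul_zero, zero_mul, sub_zero,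
    add_zero, zero_add, neg_zero, zero_div]
  linarith

theorem statement3 (d : ℕ) (X Y : Matrix (Fin d) (Fin d) ℂ)
    (hX : X.IsHermitian) (hY : Y.IsHermitian) :
    (Matrix.trace (tens4 X X Y Y * psym d 4)).re ≤
      (13 / 6) * (Matrix.trace (tens2 X X * psym d 2)).re *
        (Matrix.trace (tens2 Y Y * psym d 2)).re := by
  rw [trace_tens4_mul_psym, trace_tens2_mul_psym, trace_tens2_mul_psym, hX.trace_mul_self,
    hY.trace_mul_self, hX.trace_mul_self_mul_mul_self hY, ← hX.ofReal_re_trace,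
    ← hY.ofReal_re_trace]
  open scoped Matrix.Norms.Frobenius in
  exact re_cycle_polynomial_le (norm_trace_mul_le X Y) (norm_trace_mul_mul_le X X Y)
    (norm_trace_mul_mul_le X Y Y) (norm_nonneg _) (frobenius_norm_mul X Y)
    (by simpa only [mul_assoc] using norm_trace_mul_le (X * Y) (X * Y))
end

section
/- Let Φ be a unital quantum channel on ℂ^d and let ρ, σ be quantum states on ℂ^d. Then d_av^s(Φ(ρ), Φ(σ)) ≤ d_av^s(ρ, σ); equivalently, ‖Φ(ρ)−Φ(σ)‖_HS ≤ ‖ρ−σ‖_HS. -/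
open Matrix Kronecker ComplexOrder

/-- The Hilbert–Schmidt (Frobenius) norm of a complex matrix. -/
noncomputable def hsNorm {n : Type*} [Fintype n] (A : Matrix n n ℂ) : ℝ :=
  Real.sqrt ((Matrix.trace (Aᴴ * A)).re)

/-- The average-case distance between quantum states. -/
noncomputable def davS {n : Type*} [Fintype n] (ρ σ : Matrix n n ℂ) : ℝ :=
  (1 / 2) * hsNorm (ρ - σ)

/-- A quantum state: a positive semidefinite matrix of trace one. -/
def IsState {n : Type*} [Fintype n] (ρ : Matrix n n ℂ) : Prop :=
  ρ.PosSemidef ∧ ρ.trace = 1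

/-- The (normalized) Choi matrix `J_Λ = (1/d) ∑ᵢⱼ E_ij ⊗ Λ(E_ij)` of a linear map on matrices. -/
noncomputable def choi {n : Type*} [Fintype n] [DecidableEq n]
    (Λ : Matrix n n ℂ →ₗ[ℂ] Matrix n n ℂ) : Matrix (n × n) (n × n) ℂ :=
  ((Fintype.card n : ℂ))⁻¹ •
    ∑ i, ∑ j, (Matrix.single i j (1 : ℂ)) ⊗ₖ Λ (Matrix.single i j (1 : ℂ))

/-- A quantum channel: a completely positive (positive semidefinite Choi matrix)
trace-preserving linear map. -/
def IsChannel {n : Type*} [Fintype n] [DecidableEq n]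
    (Λ : Matrix n n ℂ →ₗ[ℂ] Matrix n n ℂ) : Prop :=
  (choi Λ).PosSemidef ∧ ∀ X, (Λ X).trace = X.trace

/-!
A completely positive map has a Kraus form `Φ X = ∑ₘ Aₘ X Aₘᴴ`, obtained by factoring its Choi
matrix as `Bᴴ B`. Unitality means `∑ₘ Aₘ Aₘᴴ = 1`, and then, with `Y = Φ X` and
`Wₘ = X Aₘᴴ - Aₘᴴ Y`, one has `Φ (Xᴴ X) - Yᴴ Y = ∑ₘ Wₘᴴ Wₘ ≥ 0` (Kadison–Schwarz). Taking traces
and using trace preservation gives `‖Φ X‖_HS² ≤ ‖X‖_HS²`; apply this to `X = ρ - σ`.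
-/

namespace Matrix

theorem mul_single_one_mul_apply {α n p q : Type*} [Semiring α] [Fintype n] [DecidableEq n]
    (M : Matrix p n α) (N : Matrix n q α) (i j : n) (k : p) (l : q) :
    (M * single i j (1 : α) * N) k l = M k i * N j l := by
  simp [Matrix.mul_apply, single_apply, ite_and]

variable {n p ι : Type*} [Fintype n] [Fintype ι]

def krausMap (A : ι → Matrix p n ℂ) : Matrix n n ℂ →ₗ[ℂ] Matrix p p ℂ where
  toFun X := ∑ m, A m * X * (A m)ᴴ
  map_add' X Y := by simp only [Matrix.mul_add, Matrix.add_mul, Finset.sum_add_distrib]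
  map_smul' c X := by
    simp only [Matrix.mul_smul, Matrix.smul_mul, Finset.smul_sum, RingHom.id_apply]

lemma krausMap_apply (A : ι → Matrix p n ℂ) (X : Matrix n n ℂ) :
    krausMap A X = ∑ m, A m * X * (A m)ᴴ := rfl

lemma krausMap_conjTranspose (A : ι → Matrix p n ℂ) (X : Matrix n n ℂ) :
    krausMap A Xᴴ = (krausMap A X)ᴴ := by
  simp only [krausMap_apply, conjTranspose_sum, conjTranspose_mul, conjTranspose_conjTranspose,
    Matrix.mul_assoc]

theorem posSemidef_krausMap_sub_conjTranspose_mul_self [Fintype p] [DecidableEq p]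
    (A : ι → Matrix p n ℂ) (hA : ∑ m, A m * (A m)ᴴ = 1) (X : Matrix n n ℂ) :
    (krausMap A (Xᴴ * X) - (krausMap A X)ᴴ * krausMap A X).PosSemidef := by
  set Y := krausMap A X
  set W : ι → Matrix n p ℂ := fun m => X * (A m)ᴴ - (A m)ᴴ * Y
  have hW : ∀ m, (W m)ᴴ * W m = A m * (Xᴴ * X) * (A m)ᴴ - A m * Xᴴ * (A m)ᴴ * Y
      - Yᴴ * (A m * X * (A m)ᴴ) + Yᴴ * (A m * (A m)ᴴ) * Y := by
    intro m
    simp only [W, conjTranspose_sub, conjTranspose_mul, conjTranspose_conjTranspose,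
      Matrix.sub_mul, Matrix.mul_sub, Matrix.mul_assoc]
    abel
  have hsum : krausMap A (Xᴴ * X) - Yᴴ * Y = ∑ m, (W m)ᴴ * W m := by
    simp only [hW, Finset.sum_add_distrib, Finset.sum_sub_distrib, ← Finset.sum_mul,
      ← Finset.mul_sum, hA, ← krausMap_apply, krausMap_conjTranspose]
    simp only [Y, Matrix.mul_one]
    abel
  rw [hsum]
  exact posSemidef_sum _ fun m _ => posSemidef_conjTranspose_mul_self (W m)

end Matrix

section Choi

variable {n : Type*} [Fintype n] [DecidableEq n]

lemma choi_apply (Λ : Matrix n n ℂ →ₗ[ℂ] Matrix n n ℂ) (i j k l : n) :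
    choi Λ (i, k) (j, l) = (Fintype.card n : ℂ)⁻¹ * Λ (single i j 1) k l := by
  simp only [choi, Matrix.smul_apply, Matrix.sum_apply, kroneckerMap_apply, single_apply,
    smul_eq_mul, ite_and, ite_mul, one_mul, zero_mul]
  simp

theorem exists_eq_krausMap_of_posSemidef_choi {Λ : Matrix n n ℂ →ₗ[ℂ] Matrix n n ℂ}
    (hΛ : (choi Λ).PosSemidef) : ∃ A : n × n → Matrix n n ℂ, Λ = krausMap A := by
  open scoped MatrixOrder in
  obtain ⟨B, hB⟩ := CStarAlgebra.nonneg_iff_eq_star_mul_self.mp hΛ.nonneg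
  refine ⟨fun m => (√(Fintype.card n : ℝ) : ℂ) • of fun k i => star (B m (i, k)), ?_⟩
  refine Matrix.ext_linearMap (R := ℂ) fun i j => LinearMap.ext_ring ?_
  ext k l
  have : Nonempty n := ⟨i⟩
  have hcard : (Fintype.card n : ℂ) ≠ 0 := Nat.cast_ne_zero.mpr Fintype.card_ne_zero
  have hentry := choi_apply Λ i j k l
  rw [hB, eq_inv_mul_iff_mul_eq₀ hcard] at hentry
  simp only [LinearMap.coe_comp, Function.comp_apply, singleLinearMap_apply, krausMap_apply,
    Matrix.sum_apply, mul_single_one_mul_apply]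
  rw [← hentry, star_eq_conjTranspose, mul_apply, Finset.mul_sum]
  refine Finset.sum_congr rfl fun m _ => ?_
  have hsqrt : (√(Fintype.card n : ℝ) : ℂ) * √(Fintype.card n : ℝ) = Fintype.card n := by
    rw [← Complex.ofReal_mul, Real.mul_self_sqrt (Nat.cast_nonneg _), Complex.ofReal_natCast]
  simp only [Matrix.smul_apply, conjTranspose_apply, of_apply, Complex.star_def, smul_eq_mul,
    map_mul, Complex.conj_ofReal, Complex.conj_conj]
  linear_combination (starRingEnd ℂ (B m (i, k)) * B m (j, l)) * hsqrt.symm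

end Choi

namespace IsChannel

variable {n : Type*} [Fintype n] [DecidableEq n] {Φ : Matrix n n ℂ →ₗ[ℂ] Matrix n n ℂ}

theorem re_trace_conjTranspose_mul_self_map_le (hΦ : IsChannel Φ) (hunital : Φ 1 = 1)
    (X : Matrix n n ℂ) : (trace ((Φ X)ᴴ * Φ X)).re ≤ (trace (Xᴴ * X)).re := by
  obtain ⟨A, rfl⟩ := exists_eq_krausMap_of_posSemidef_choi hΦ.1
  have hA : ∑ m, A m * (A m)ᴴ = 1 := by simpa [krausMap_apply] using hunital
  have htrace := (posSemidef_krausMap_sub_conjTranspose_mul_self A hA X).trace_nonneg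
  rw [trace_sub, hΦ.2, sub_nonneg] at htrace
  exact (Complex.le_def.mp htrace).1

theorem hsNorm_map_le (hΦ : IsChannel Φ) (hunital : Φ 1 = 1) (X : Matrix n n ℂ) :
    hsNorm (Φ X) ≤ hsNorm X :=
  Real.sqrt_le_sqrt (hΦ.re_trace_conjTranspose_mul_self_map_le hunital X)

end IsChannel

theorem statement7_general (d : ℕ)
    (Φ : Matrix (Fin d) (Fin d) ℂ →ₗ[ℂ] Matrix (Fin d) (Fin d) ℂ)
    (hΦ : IsChannel Φ) (hΦunital : Φ 1 = 1)
    (ρ σ : Matrix (Fin d) (Fin d) ℂ) :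
    davS (Φ ρ) (Φ σ) ≤ davS ρ σ := by
  rw [davS, davS, ← map_sub]
  gcongr
  exact hΦ.hsNorm_map_le hΦunital (ρ - σ)

theorem statement7 (d : ℕ)
    (Φ : Matrix (Fin d) (Fin d) ℂ →ₗ[ℂ] Matrix (Fin d) (Fin d) ℂ)
    (hΦ : IsChannel Φ) (hΦunital : Φ 1 = 1)
    (ρ σ : Matrix (Fin d) (Fin d) ℂ) (hρ : IsState ρ) (hσ : IsState σ) :
    davS (Φ ρ) (Φ σ) ≤ davS ρ σ :=
  statement7_general d Φ hΦ hΦunital ρ σ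
end
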